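/- Fix W diagonal on V vertices with eigenvalues 0 = W_m < W_{u₁} ≤ … ≤ W_{u_{V−1}}. Define Θ(x) = Σ_u (W_u + x)^{−1} − 1 for x > 0, and let X > 0 be its unique zero. Then for every x > 0, |x − X| ≤ (W_{u_{V−1}} + x)·|Θ(x)|. -/

import Mathlib

/-!
Since `Σ_u (W_u + X)⁻¹ = 1`, the resolvent identity gives
`Θ(x) = (X - x) · Σ_u ((W_u + x)(W_u + X))⁻¹`, and each term of this last sum is at least
`(W_max + x)⁻¹ (W_u + X)⁻¹`, so the sum is at least `(W_max + x)⁻¹`.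
-/

open Finset

section InverseSums

variable {ι : Type*} [Fintype ι] (w : ι → ℝ) {x y : ℝ}

theorem sum_inv_add_sub_sum_inv_add (hx : ∀ u, w u + x ≠ 0) (hy : ∀ u, w u + y ≠ 0) :
    ∑ u, (w u + x)⁻¹ - ∑ u, (w u + y)⁻¹ = (y - x) * ∑ u, ((w u + x) * (w u + y))⁻¹ := by
  rw [mul_sum, ← sum_sub_distrib]
  refine sum_congr rfl fun u _ => ?_
  have := hx u
  have := hy u
  field_simp
  ring

theorem sum_inv_add_le_mul_sum_inv_mul {M : ℝ} (hM : ∀ u, w u ≤ M)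
    (hx : ∀ u, 0 < w u + x) (hy : ∀ u, 0 < w u + y) :
    ∑ u, (w u + y)⁻¹ ≤ (M + x) * ∑ u, ((w u + x) * (w u + y))⁻¹ := by
  rw [mul_sum]
  refine sum_le_sum fun u _ => ?_
  rw [mul_inv, ← mul_assoc, ← div_eq_mul_inv (M + x)]
  refine le_mul_of_one_le_left (inv_nonneg.2 (hy u).le) ?_
  rw [one_le_div (hx u)]
  linarith [hM u]

theorem abs_sub_mul_sum_inv_add_le {M : ℝ} (hM : ∀ u, w u ≤ M)
    (hx : ∀ u, 0 < w u + x) (hy : ∀ u, 0 < w u + y) :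
    |x - y| * ∑ u, (w u + y)⁻¹ ≤ (M + x) * |∑ u, (w u + x)⁻¹ - ∑ u, (w u + y)⁻¹| := by
  set S := ∑ u, ((w u + x) * (w u + y))⁻¹
  have hS : 0 ≤ S := sum_nonneg fun u _ => inv_nonneg.2 (mul_pos (hx u) (hy u)).le
  calc |x - y| * ∑ u, (w u + y)⁻¹
      ≤ |x - y| * ((M + x) * S) :=
        mul_le_mul_of_nonneg_left (sum_inv_add_le_mul_sum_inv_mul w hM hx hy) (abs_nonneg _)
    _ = (M + x) * |(y - x) * S| := by rw [abs_mul, abs_of_nonneg hS, abs_sub_comm]; ring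
    _ = (M + x) * |∑ u, (w u + x)⁻¹ - ∑ u, (w u + y)⁻¹| := by
        rw [sum_inv_add_sub_sum_inv_add w (fun u => (hx u).ne') (fun u => (hy u).ne')]

end InverseSums

theorem theta_root_bound {V : ℕ} (W : Fin V → ℝ) (m : Fin V)
    (hWm : W m = 0) (hmin : ∀ u : Fin V, u ≠ m → 0 < W u)
    (X : ℝ) (hX : 0 < X) (hroot : ∑ u : Fin V, (W u + X)⁻¹ = 1)
    (x : ℝ) (hx : 0 < x) :
    |x - X| ≤
      (Finset.univ.sup' ⟨m, Finset.mem_univ m⟩ W + x) * |∑ u : Fin V, (W u + x)⁻¹ - 1| := by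
  have hW : ∀ u, 0 ≤ W u := fun u => by
    rcases eq_or_ne u m with rfl | hu
    · exact hWm.ge
    · exact (hmin u hu).le
  have key := abs_sub_mul_sum_inv_add_le W (M := univ.sup' ⟨m, mem_univ m⟩ W)
    (fun u => le_sup' W (mem_univ u))
    (fun u => add_pos_of_nonneg_of_pos (hW u) hx) (fun u => add_pos_of_nonneg_of_pos (hW u) hX)
  rwa [hroot, mul_one] at key
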